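/- arXiv:1910.04568 — 2 statements merged into one kernel-verified Lean document; each statement's English description precedes it below -/
import Mathlib

section
/- Let Δ be a base of a root system spanning a Euclidean space with Weyl-invariant inner product, and let I ⊂ Δ. Then the set I ∪ {w_γ : γ ∈ Δ∖I} (simple roots in I together with the dual weights of the simple roots not in I) is a basis of E. Moreover, for every simple root α ∈ Δ, writing α = Σ_{β∈I} c_β·β + Σ_{γ∈Δ∖I} c_γ·w_γ in this basis, all coefficients c_δ with δ ≠ α are ≤ 0. -/
open Finset
open scoped RealInnerProductSpace

/-!
Distinct simple roots are obtuse: a positive Cartan integer equal to `1` would make `α - β` a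
root, and two Cartan integers `≥ 2` contradict `‖α - β‖² > 0`.

The roots in `I` and the dual weights `w_γ`, `γ ∉ I`, are two linearly independent families
spanning mutually orthogonal subspaces, so together they are independent, hence a basis by
counting. For the signs, if `α ∈ I` the expansion is `α` itself. Otherwise the `I`-part `x` of
`α` satisfies `⟪x, β⟫ = ⟪α, β⟫ ≤ 0` for `β ∈ I`; for a linearly independent obtuse family this
forces all coefficients of `x` to be `≤ 0`, since the positive part `y` of `x` satisfies
`‖y‖² = ⟪x, y⟫ - ⟪x - y, y⟫ ≤ 0`. Finally `c_γ = ⟪α, γ⟫ - ∑_{β ∈ I} c_β ⟪β, γ⟫ ≤ 0` for `γ ∉ I`.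
-/

/-- `Δ` is a base (set of simple roots) of a (reduced, crystallographic) root system `Φ`
spanning the Euclidean space `E`.  Since the reflections used here are the orthogonal
reflections with respect to the inner product, the inner product is automatically
invariant under the Weyl group. -/
structure IsRootSystemBase {E : Type*} [NormedAddCommGroup E] [InnerProductSpace ℝ E]
    [FiniteDimensional ℝ E] (Φ : Set E) (Δ : Finset E) : Prop where
  subset : (Δ : Set E) ⊆ Φ
  span_top : Submodule.span ℝ (Δ : Set E) = ⊤
  indep : LinearIndependent ℝ (fun α : Δ => (α : E))
  ne_zero : ∀ α ∈ Φ, α ≠ (0 : E)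
  reflect_mem : ∀ α ∈ Φ, ∀ β ∈ Φ, β - (2 * ⟪α, β⟫ / ⟪α, α⟫) • α ∈ Φ
  crystallographic : ∀ α ∈ Φ, ∀ β ∈ Φ, ∃ n : ℤ, 2 * ⟪α, β⟫ / ⟪α, α⟫ = (n : ℝ)
  pos_or_neg : ∀ x ∈ Φ,
      (∃ c : E → ℝ, (∀ β ∈ Δ, 0 ≤ c β) ∧ x = ∑ β ∈ Δ, c β • β) ∨
      (∃ c : E → ℝ, (∀ β ∈ Δ, 0 ≤ c β) ∧ x = -∑ β ∈ Δ, c β • β)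

/-- The root system `Φ` with base `Δ` is irreducible: `Δ` cannot be split into two
nonempty mutually orthogonal pieces. -/
def IsIrreducibleBase {E : Type*} [NormedAddCommGroup E] [InnerProductSpace ℝ E] [DecidableEq E]
    (Δ : Finset E) : Prop :=
  ∀ s ⊆ Δ, s.Nonempty → s ≠ Δ → ∃ α ∈ s, ∃ β ∈ Δ \ s, ⟪α, β⟫ ≠ (0 : ℝ)

namespace IsRootSystemBase

variable {E : Type*} [NormedAddCommGroup E] [InnerProductSpace ℝ E] [FiniteDimensional ℝ E]
  {Φ : Set E} {Δ : Finset E}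

theorem linearIndepOn (hbase : IsRootSystemBase Φ Δ) : LinearIndepOn ℝ id (Δ : Set E) :=
  hbase.indep

theorem finrank_eq_card (hbase : IsRootSystemBase Φ Δ) : Module.finrank ℝ E = Δ.card := by
  rw [← finrank_top ℝ E, ← hbase.span_top, finrank_span_finset_eq_card hbase.linearIndepOn]

theorem sub_ne_sum_nonneg (hbase : IsRootSystemBase Φ Δ) {α β : E}
    (hα : α ∈ Δ) (hβ : β ∈ Δ) (hne : α ≠ β) (c : E → ℝ) (hc : ∀ γ ∈ Δ, 0 ≤ c γ) :
    α - β ≠ ∑ γ ∈ Δ, c γ • γ := by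
  classical
  intro h
  have hcoeff := linearIndepOn_finset_iffₛ.mp hbase.linearIndepOn
    (fun γ => if γ = α then 1 else 0) (fun γ => c γ + if γ = β then 1 else 0)
    (by simp [ite_smul, add_smul, Finset.sum_add_distrib, hα, hβ, ← h]) β hβ
  simp only [hne.symm, if_false, if_true] at hcoeff
  linarith [hc β hβ]

theorem sub_notMem (hbase : IsRootSystemBase Φ Δ) {α β : E}
    (hα : α ∈ Δ) (hβ : β ∈ Δ) (hne : α ≠ β) : α - β ∉ Φ := by
  intro hmem
  obtain ⟨c, hc, h⟩ | ⟨c, hc, h⟩ := hbase.pos_or_neg _ hmem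
  · exact hbase.sub_ne_sum_nonneg hα hβ hne c hc h
  · exact hbase.sub_ne_sum_nonneg hβ hα hne.symm c hc (by rw [← neg_sub, h, neg_neg])

theorem exists_pos_int_of_inner_pos (hbase : IsRootSystemBase Φ Δ) {α β : E} (hα : α ∈ Φ)
    (hβ : β ∈ Φ) (hpos : 0 < ⟪α, β⟫) : ∃ n : ℤ, 0 < n ∧ 2 * ⟪α, β⟫ / ⟪α, α⟫ = n := by
  obtain ⟨n, hn⟩ := hbase.crystallographic α hα β hβ
  have hαα : 0 < ⟪α, α⟫ := real_inner_self_pos.2 (hbase.ne_zero α hα)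
  refine ⟨n, ?_, hn⟩
  have : (0 : ℝ) < n := hn ▸ by positivity
  exact_mod_cast this

theorem inner_nonpos (hbase : IsRootSystemBase Φ Δ) {α β : E}
    (hα : α ∈ Δ) (hβ : β ∈ Δ) (hne : α ≠ β) : ⟪α, β⟫ ≤ 0 := by
  by_contra! hpos
  have hαΦ := hbase.subset hα
  have hβΦ := hbase.subset hβ
  obtain ⟨n, hn, hn'⟩ := hbase.exists_pos_int_of_inner_pos hαΦ hβΦ hpos
  obtain ⟨m, hm, hm'⟩ :=
    hbase.exists_pos_int_of_inner_pos hβΦ hαΦ (by rwa [real_inner_comm])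
  -- a Cartan integer `1` makes the reflection of one simple root in the other their difference
  obtain rfl | hn2 : n = 1 ∨ 2 ≤ n := by omega
  · have := hbase.reflect_mem α hαΦ β hβΦ
    rw [hn', Int.cast_one, one_smul] at this
    exact hbase.sub_notMem hβ hα hne.symm this
  obtain rfl | hm2 : m = 1 ∨ 2 ≤ m := by omega
  · have := hbase.reflect_mem β hβΦ α hαΦ
    rw [hm', Int.cast_one, one_smul] at this
    exact hbase.sub_notMem hα hβ hne this
  have hαα : 0 < ⟪α, α⟫ := real_inner_self_pos.2 (hbase.ne_zero α hαΦ)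
  have hββ : 0 < ⟪β, β⟫ := real_inner_self_pos.2 (hbase.ne_zero β hβΦ)
  rw [div_eq_iff hαα.ne'] at hn'
  rw [div_eq_iff hββ.ne', real_inner_comm] at hm'
  have hn2' : (2 : ℝ) ≤ n := by exact_mod_cast hn2
  have hm2' : (2 : ℝ) ≤ m := by exact_mod_cast hm2
  -- now `2 ⟪α, β⟫ ≥ ⟪α, α⟫ + ⟪β, β⟫`, i.e. `‖α - β‖² ≤ 0`
  have hsub : 0 < ⟪α - β, α - β⟫ := real_inner_self_pos.2 (sub_ne_zero.2 hne)
  rw [inner_sub_sub_self, real_inner_comm α β] at hsub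
  nlinarith [mul_le_mul_of_nonneg_right hn2' hαα.le, mul_le_mul_of_nonneg_right hm2' hββ.le]

end IsRootSystemBase

section Obtuse

variable {E : Type*} [NormedAddCommGroup E] [InnerProductSpace ℝ E]

theorem coeff_nonpos_of_inner_sum_nonpos {s : Finset E} (hs : LinearIndepOn ℝ id (s : Set E))
    (hobtuse : ∀ a ∈ s, ∀ b ∈ s, a ≠ b → ⟪a, b⟫ ≤ 0) {c : E → ℝ}
    (hc : ∀ b ∈ s, ⟪∑ a ∈ s, c a • a, b⟫ ≤ 0) : ∀ a ∈ s, c a ≤ 0 := by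
  classical
  set P := s.filter (fun a => 0 < c a)
  set y := ∑ a ∈ P, c a • a
  have hPs : P ⊆ s := filter_subset _ _
  have hsplit : ∑ a ∈ s, c a • a = y + ∑ a ∈ s \ P, c a • a := by
    rw [add_comm, Finset.sum_sdiff hPs]
  have hxy : ⟪∑ a ∈ s, c a • a, y⟫ ≤ 0 := by
    rw [inner_sum]
    refine sum_nonpos fun b hb => ?_
    obtain ⟨hbs, hcb⟩ := mem_filter.1 hb
    rw [real_inner_smul_right]
    exact mul_nonpos_of_nonneg_of_nonpos hcb.le (hc b hbs)
  have hzy : 0 ≤ ⟪∑ a ∈ s \ P, c a • a, y⟫ := by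
    rw [sum_inner]
    refine sum_nonneg fun a ha => ?_
    obtain ⟨has, haP⟩ := mem_sdiff.1 ha
    have hca : c a ≤ 0 := by
      by_contra! hca
      exact haP (mem_filter.2 ⟨has, hca⟩)
    rw [inner_sum]
    refine sum_nonneg fun b hb => ?_
    obtain ⟨hbs, hcb⟩ := mem_filter.1 hb
    rw [real_inner_smul_left, real_inner_smul_right]
    exact mul_nonneg_of_nonpos_of_nonpos hca (mul_nonpos_of_nonneg_of_nonpos hcb.le
      (hobtuse a has b hbs (ne_of_mem_of_not_mem hb haP).symm))
  have hy : y = 0 := by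
    rw [← real_inner_self_nonpos]
    rw [hsplit, inner_add_left] at hxy
    linarith
  have hP := linearIndepOn_finset_iff.mp (hs.mono (coe_subset.2 hPs)) c hy
  intro a ha
  by_contra! hca
  exact hca.ne' (hP a (mem_filter.2 ⟨ha, hca⟩))

end Obtuse

section DualWeights

variable {E : Type*} [NormedAddCommGroup E] [InnerProductSpace ℝ E] [DecidableEq E]
  {Δ : Finset E} {w : E → E}

theorem inner_sum_smul_dualWeight
    (hw : ∀ α ∈ Δ, ∀ β ∈ Δ, ⟪w α, β⟫ = if α = β then (1 : ℝ) else 0)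
    {t : Finset E} (ht : t ⊆ Δ) (c : E → ℝ) {δ : E} (hδ : δ ∈ Δ) :
    ⟪∑ γ ∈ t, c γ • w γ, δ⟫ = if δ ∈ t then c δ else 0 := by
  rw [sum_inner, Finset.sum_congr rfl fun γ hγ => by
    rw [real_inner_smul_left, hw γ (ht hγ) δ hδ, mul_ite, mul_one, mul_zero], sum_ite_eq']

theorem linearIndepOn_dualWeight
    (hw : ∀ α ∈ Δ, ∀ β ∈ Δ, ⟪w α, β⟫ = if α = β then (1 : ℝ) else 0)
    {t : Finset E} (ht : t ⊆ Δ) : LinearIndepOn ℝ w (t : Set E) :=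
  linearIndepOn_finset_iff.mpr fun c hc δ hδ => by
    simpa [hc, hδ] using (inner_sum_smul_dualWeight hw ht c (ht hδ)).symm

theorem linearIndepOn_ite_dualWeight (hΔ : LinearIndepOn ℝ id (Δ : Set E))
    (hw : ∀ α ∈ Δ, ∀ β ∈ Δ, ⟪w α, β⟫ = if α = β then (1 : ℝ) else 0)
    {I : Finset E} (hI : I ⊆ Δ) :
    LinearIndepOn ℝ (fun β => if β ∈ I then β else w β) (Δ : Set E) := by
  set V : E → E := fun β => if β ∈ I then β else w β
  have hroots : LinearIndepOn ℝ V (I : Set E) :=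
    (hΔ.mono (coe_subset.2 hI)).congr fun β hβ => (if_pos hβ).symm
  have hweights : LinearIndepOn ℝ V ((Δ \ I : Finset E) : Set E) :=
    (linearIndepOn_dualWeight hw sdiff_subset).congr fun β hβ =>
      (if_neg (mem_sdiff.1 hβ).2).symm
  have hortho : Submodule.span ℝ (V '' I) ⟂ Submodule.span ℝ (V '' ↑(Δ \ I)) := by
    refine Submodule.isOrtho_span.2 ?_
    rintro _ ⟨β, hβ, rfl⟩ _ ⟨γ, hγ, rfl⟩
    obtain ⟨hγΔ, hγI⟩ := mem_sdiff.1 hγ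
    simp only [mem_coe] at hβ
    simp only [V, if_pos hβ, if_neg hγI]
    rw [real_inner_comm, hw γ hγΔ β (hI hβ), if_neg (ne_of_mem_of_not_mem hβ hγI).symm]
  have := hroots.union hweights hortho.disjoint
  rwa [← coe_union, union_sdiff_of_subset hI] at this

theorem sum_add_sum_sdiff_eq_sum_ite {I : Finset E} (hI : I ⊆ Δ) (c : E → ℝ) :
    ∑ β ∈ I, c β • β + ∑ γ ∈ Δ \ I, c γ • w γ =
      ∑ β ∈ Δ, c β • (if β ∈ I then β else w β) := by
  rw [← Finset.sum_sdiff hI, add_comm]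
  congr 1 <;> refine Finset.sum_congr rfl fun β hβ => ?_
  · rw [if_neg (mem_sdiff.1 hβ).2]
  · rw [if_pos hβ]

theorem coeff_eq_zero_of_mem {I : Finset E} {α : E} {c : E → ℝ}
    (hV : LinearIndepOn ℝ (fun β => if β ∈ I then β else w β) (Δ : Set E))
    (hI : I ⊆ Δ) (hαI : α ∈ I) (hc : α = ∑ β ∈ I, c β • β + ∑ γ ∈ Δ \ I, c γ • w γ)
    {δ : E} (hδ : δ ∈ Δ) (hδα : δ ≠ α) : c δ = 0 := by
  have hsum : ∑ β ∈ Δ, (if β = α then (1 : ℝ) else 0) • (if β ∈ I then β else w β) =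
      ∑ β ∈ Δ, c β • (if β ∈ I then β else w β) := by
    rw [← sum_add_sum_sdiff_eq_sum_ite hI c, ← hc]
    simp only [ite_smul, one_smul, zero_smul, sum_ite_eq', if_pos (hI hαI), if_pos hαI]
  simpa [hδα, eq_comm] using linearIndepOn_finset_iffₛ.mp hV _ c hsum δ hδ

end DualWeights

theorem IsRootSystemBase.coeff_nonpos_of_notMem {E : Type*} [NormedAddCommGroup E]
    [InnerProductSpace ℝ E] [FiniteDimensional ℝ E] [DecidableEq E] {Φ : Set E} {Δ : Finset E}
    {w : E → E} {I : Finset E} {α : E} {c : E → ℝ} (hbase : IsRootSystemBase Φ Δ)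
    (hw : ∀ α ∈ Δ, ∀ β ∈ Δ, ⟪w α, β⟫ = if α = β then (1 : ℝ) else 0)
    (hI : I ⊆ Δ) (hα : α ∈ Δ) (hαI : α ∉ I)
    (hc : α = ∑ β ∈ I, c β • β + ∑ γ ∈ Δ \ I, c γ • w γ)
    {δ : E} (hδ : δ ∈ Δ) (hδα : δ ≠ α) : c δ ≤ 0 := by
  have hpair : ∀ γ ∈ Δ, ⟪α, γ⟫ = ⟪∑ β ∈ I, c β • β, γ⟫ + if γ ∈ Δ \ I then c γ else 0 :=
    fun γ hγ => by
      conv_lhs => rw [hc]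
      rw [inner_add_left, inner_sum_smul_dualWeight hw sdiff_subset c hγ]
  have hcI : ∀ β ∈ I, c β ≤ 0 := by
    refine coeff_nonpos_of_inner_sum_nonpos (hbase.linearIndepOn.mono (coe_subset.2 hI))
      (fun a ha b hb => hbase.inner_nonpos (hI ha) (hI hb)) fun β hβ => ?_
    have hpairβ := hpair β (hI hβ)
    rw [if_neg fun h => (mem_sdiff.1 h).2 hβ, add_zero] at hpairβ
    linarith [hbase.inner_nonpos hα (hI hβ) (ne_of_mem_of_not_mem hβ hαI).symm]
  by_cases hδI : δ ∈ I
  · exact hcI δ hδI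
  have hsum : 0 ≤ ⟪∑ β ∈ I, c β • β, δ⟫ := by
    rw [sum_inner]
    refine sum_nonneg fun β hβ => ?_
    rw [real_inner_smul_left]
    exact mul_nonneg_of_nonpos_of_nonpos (hcI β hβ)
      (hbase.inner_nonpos (hI hβ) hδ (ne_of_mem_of_not_mem hβ hδI))
  have hpairδ := hpair δ hδ
  rw [if_pos (mem_sdiff.2 ⟨hδ, hδI⟩)] at hpairδ
  linarith [hbase.inner_nonpos hα hδ hδα.symm]

/-- For `I ⊆ Δ`, the set `I ∪ {w_γ : γ ∈ Δ∖I}` is a basis of `E`, and in the expansion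
`α = Σ_{β∈I} c_β·β + Σ_{γ∈Δ∖I} c_γ·w_γ` of a simple root `α`, every coefficient
`c_δ` with `δ ≠ α` is non-positive. -/
theorem roots_and_dual_weights_basis_and_sign
    {E : Type*} [NormedAddCommGroup E] [InnerProductSpace ℝ E] [FiniteDimensional ℝ E]
    [DecidableEq E] (Φ : Set E) (Δ : Finset E) (hbase : IsRootSystemBase Φ Δ)
    (w : E → E) (hw : ∀ α ∈ Δ, ∀ β ∈ Δ, ⟪w α, β⟫ = if α = β then (1 : ℝ) else 0)
    (I : Finset E) (hI : I ⊆ Δ) :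
    (∃ b : Module.Basis Δ ℝ E, ∀ β : Δ, b β = if (β : E) ∈ I then (β : E) else w β) ∧
    (∀ α ∈ Δ, ∀ c : E → ℝ,
      α = ∑ β ∈ I, c β • β + ∑ γ ∈ Δ \ I, c γ • w γ →
      ∀ δ ∈ Δ, δ ≠ α → c δ ≤ 0) := by
  have hV := linearIndepOn_ite_dualWeight hbase.linearIndepOn hw hI
  have hcard : Fintype.card Δ = Module.finrank ℝ E := by
    rw [Fintype.card_coe, hbase.finrank_eq_card]
  refine ⟨⟨basisOfLinearIndependentOfCardEqFinrank' _ hV hcard, fun β => by simp⟩, ?_⟩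
  intro α hα c hc δ hδ hδα
  by_cases hαI : α ∈ I
  · exact (coeff_eq_zero_of_mem hV hI hαI hc hδ hδα).le
  · exact hbase.coeff_nonpos_of_notMem hw hI hα hαI hc hδ hδα
end

section
/- Let Δ be a base of a root system spanning a Euclidean space with Weyl-invariant inner product, let α ∈ Δ and I ⊂ Δ∖{α}. Set 𝔞_I = {a ∈ E* : β(a) = 0 for all β ∈ I}. For every a ∈ 𝔞_I satisfying w̄_α(a) ≥ w̄_γ(a) for all γ ∈ Δ∖I and w̄_α(a) ≥ 0, the estimate α(a) ≥ w̄_α(a) holds. -/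
open Finset
open scoped RealInnerProductSpace

/-!
Let `u = α + ∑_{β ∈ I} κ_β β` be the component of `α` orthogonal to `span I`; since distinct
simple roots are obtuse, `κ ≥ 0`. As `a` kills `I`, `α(a) = u(a)`, and expanding `u` in the dual
weights gives `u(a) = ∑_γ ⟪u, γ⟫ d_γ w̄_γ(a)`. The coefficients vanish on `I` and are `≤ 0` off
`I ∪ {α}`, where `w̄_γ(a) ≤ w̄_α(a)`; hence
`u(a) ≥ (∑_γ ⟪u, γ⟫ d_γ) w̄_α(a) = ⟪u, ∑_β w_β⟫ w̄_α(a) = (1 + ∑_β κ_β) w̄_α(a) ≥ w̄_α(a)`.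
-/

section DualFamily

variable {E : Type*} [NormedAddCommGroup E] [InnerProductSpace ℝ E]

lemma eq_zero_of_forall_inner_eq_zero_of_span_eq_top {s : Set E}
    (hs : Submodule.span ℝ s = ⊤) {x : E} (hx : ∀ v ∈ s, ⟪x, v⟫ = 0) : x = 0 := by
  have hzero : innerₛₗ ℝ x = 0 := LinearMap.ext_on hs fun v hv => hx v hv
  simpa using LinearMap.congr_fun hzero x

lemma exists_nonneg_coeffs_of_inner_nonneg {S : Finset E}
    (hS : (S : Set E).Pairwise fun β γ => ⟪β, γ⟫ ≤ 0) {v : E}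
    (hv : v ∈ Submodule.span ℝ (S : Set E)) (hpos : ∀ γ ∈ S, 0 ≤ ⟪v, γ⟫) :
    ∃ c : E → ℝ, (∀ β ∈ S, 0 ≤ c β) ∧ v = ∑ β ∈ S, c β • β := by
  obtain ⟨c, -, rfl⟩ := Submodule.mem_span_finset.mp hv
  set vp := ∑ β ∈ S, (c β)⁺ • β
  set vm := ∑ β ∈ S, (c β)⁻ • β
  have hsplit : ∑ β ∈ S, c β • β = vp - vm := by
    simp only [vp, vm, ← sum_sub_distrib, ← sub_smul, posPart_sub_negPart]
  have hcross : ⟪vp, vm⟫ ≤ 0 := by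
    simp only [vp, vm, sum_inner, inner_sum, real_inner_smul_left, real_inner_smul_right]
    refine sum_nonpos fun β hβ => sum_nonpos fun γ hγ => ?_
    rcases eq_or_ne β γ with rfl | hne
    · rcases le_total 0 (c β) with h | h <;> simp [h]
    · exact mul_nonpos_of_nonneg_of_nonpos (negPart_nonneg _)
        (mul_nonpos_of_nonneg_of_nonpos (posPart_nonneg _) (hS hγ hβ hne.symm))
  have hvm : 0 ≤ ⟪vp - vm, vm⟫ := by
    rw [← hsplit, inner_sum]
    exact sum_nonneg fun γ hγ => by
      rw [real_inner_smul_right]; exact mul_nonneg (negPart_nonneg _) (hpos γ hγ)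
  have hvm0 : vm = 0 := by
    rw [inner_sub_left] at hvm
    exact real_inner_self_nonpos.mp (by linarith)
  exact ⟨fun β => (c β)⁺, fun β _ => posPart_nonneg _, by rw [hsplit, hvm0, sub_zero]⟩

/-- The negative of the orthogonal projection of `α` onto `span I` has nonnegative inner products
with `I`, so it is a nonnegative combination of `I`. -/
lemma exists_nonneg_coeffs_add_orthogonal {I : Finset E}
    (hI : (I : Set E).Pairwise fun β γ => ⟪β, γ⟫ ≤ 0) {α : E} (hα : ∀ γ ∈ I, ⟪α, γ⟫ ≤ 0) :
    ∃ κ : E → ℝ, (∀ β ∈ I, 0 ≤ κ β) ∧ ∀ γ ∈ I, ⟪α + ∑ β ∈ I, κ β • β, γ⟫ = 0 := by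
  obtain ⟨p, hp, u, hu, hαpu⟩ :=
    (Submodule.span ℝ (I : Set E)).exists_add_mem_mem_orthogonal α
  have hu_inner : ∀ γ ∈ I, ⟪u, γ⟫ = 0 := fun γ hγ =>
    (Submodule.mem_orthogonal' _ u).mp hu γ (Submodule.subset_span hγ)
  have hneg : ∀ γ ∈ I, 0 ≤ ⟪-p, γ⟫ := fun γ hγ => by
    rw [show -p = u - α by rw [hαpu]; abel, inner_sub_left, hu_inner γ hγ]
    linarith [hα γ hγ]
  obtain ⟨κ, hκ, hpκ⟩ := exists_nonneg_coeffs_of_inner_nonneg hI (Submodule.neg_mem _ hp) hneg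
  refine ⟨κ, hκ, fun γ hγ => ?_⟩
  rw [← hpκ, show α + -p = u by rw [hαpu]; abel]
  exact hu_inner γ hγ

variable [DecidableEq E]

def IsDualFamily (Δ : Finset E) (w : E → E) : Prop :=
  ∀ α ∈ Δ, ∀ β ∈ Δ, ⟪w α, β⟫ = if α = β then (1 : ℝ) else 0

variable {Δ : Finset E} {w : E → E}

namespace IsDualFamily

lemma inner_sum_smul (hw : IsDualFamily Δ w) {γ : E} (hγ : γ ∈ Δ) (c : E → ℝ) :
    ⟪w γ, ∑ β ∈ Δ, c β • β⟫ = c γ := by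
  simp only [inner_sum, real_inner_smul_right]
  rw [sum_congr rfl fun β hβ => by rw [hw γ hγ β hβ, mul_ite, mul_one, mul_zero],
    sum_ite_eq, if_pos hγ]

lemma inner_sum (hw : IsDualFamily Δ w) {β : E} (hβ : β ∈ Δ) :
    ⟪β, ∑ γ ∈ Δ, w γ⟫ = 1 := by
  rw [_root_.inner_sum, sum_congr rfl fun γ hγ => by rw [real_inner_comm, hw γ hγ β hβ],
    sum_ite_eq', if_pos hβ]

lemma ne_zero (hw : IsDualFamily Δ w) {γ : E} (hγ : γ ∈ Δ) : w γ ≠ 0 := by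
  intro h
  simpa [h] using hw γ hγ γ hγ

lemma sum_inner_smul (hw : IsDualFamily Δ w) (hspan : Submodule.span ℝ (Δ : Set E) = ⊤)
    (v : E) : ∑ γ ∈ Δ, ⟪v, γ⟫ • w γ = v := by
  refine (sub_eq_zero.mp (eq_zero_of_forall_inner_eq_zero_of_span_eq_top hspan
    fun δ hδ => ?_)).symm
  rw [inner_sub_left, sum_inner, sum_congr rfl fun γ hγ => by
    rw [real_inner_smul_left, hw γ hγ δ hδ, mul_ite, mul_one, mul_zero],
    sum_ite_eq', if_pos (mem_coe.mp hδ), sub_self]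

lemma inner_nonneg (hw : IsDualFamily Δ w) (hspan : Submodule.span ℝ (Δ : Set E) = ⊤)
    (hΔ : (Δ : Set E).Pairwise fun β γ => ⟪β, γ⟫ ≤ 0) {β γ : E} (hβ : β ∈ Δ) (hγ : γ ∈ Δ) :
    0 ≤ ⟪w β, w γ⟫ := by
  have hpos : ∀ δ ∈ Δ, 0 ≤ ⟪w γ, δ⟫ := fun δ hδ => by
    rw [hw γ hγ δ hδ]; split_ifs <;> norm_num
  obtain ⟨c, hc, hwc⟩ := exists_nonneg_coeffs_of_inner_nonneg hΔ (hspan ▸ trivial) hpos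
  rw [hwc, hw.inner_sum_smul hβ c]
  exact hc β hβ

lemma inner_sum_pos (hw : IsDualFamily Δ w) (hspan : Submodule.span ℝ (Δ : Set E) = ⊤)
    (hΔ : (Δ : Set E).Pairwise fun β γ => ⟪β, γ⟫ ≤ 0) {γ : E} (hγ : γ ∈ Δ) :
    0 < ⟪w γ, ∑ β ∈ Δ, w β⟫ := by
  rw [_root_.inner_sum]
  exact sum_pos' (fun β hβ => hw.inner_nonneg hspan hΔ hγ hβ)
    ⟨γ, hγ, real_inner_self_pos.mpr (hw.ne_zero hγ)⟩

end IsDualFamily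


variable {Φ : Set E} {I : Finset E} {α : E}

/-- If `⟪β, γ⟫ > 0`, the reflection `β - k • γ` (`k > 0`) of `β` in `γ` is a root with
coordinate `1` at `β` and `-k` at `γ`, so it is neither positive nor negative. -/
lemma IsRootSystemBase.pairwise_inner_nonpos [FiniteDimensional ℝ E]
    (hbase : IsRootSystemBase Φ Δ) (hw : IsDualFamily Δ w) :
    (Δ : Set E).Pairwise fun β γ => ⟪β, γ⟫ ≤ 0 := by
  intro β hβ γ hγ hne
  by_contra! hpos
  set k := 2 * ⟪γ, β⟫ / ⟪γ, γ⟫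
  have hk : 0 < k := div_pos (by rw [real_inner_comm]; linarith)
    (real_inner_self_pos.mpr (hbase.ne_zero γ (hbase.subset hγ)))
  have hβcoord : ⟪w β, β - k • γ⟫ = 1 := by
    rw [inner_sub_right, real_inner_smul_right, hw β hβ β hβ, hw β hβ γ hγ, if_pos rfl,
      if_neg hne]
    ring
  have hγcoord : ⟪w γ, β - k • γ⟫ = -k := by
    rw [inner_sub_right, real_inner_smul_right, hw γ hγ β hβ, hw γ hγ γ hγ, if_pos rfl,
      if_neg (Ne.symm hne)]
    ring
  rcases hbase.pos_or_neg _ (hbase.reflect_mem γ (hbase.subset hγ) β (hbase.subset hβ)) with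
    ⟨c, hc, hrep⟩ | ⟨c, hc, hrep⟩
  · rw [hrep, hw.inner_sum_smul hγ] at hγcoord
    linarith [hc γ hγ]
  · rw [hrep, inner_neg_right, hw.inner_sum_smul hβ] at hβcoord
    linarith [hc β hβ]

lemma IsDualFamily.exists_sub_mem_span_inner_nonpos (hw : IsDualFamily Δ w)
    (hΔ : (Δ : Set E).Pairwise fun β γ => ⟪β, γ⟫ ≤ 0) (hα : α ∈ Δ) (hI : I ⊆ Δ.erase α) :
    ∃ u : E, u - α ∈ Submodule.span ℝ (I : Set E) ∧ (∀ γ ∈ I, ⟪u, γ⟫ = 0) ∧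
      (∀ γ ∈ Δ, γ ≠ α → ⟪u, γ⟫ ≤ 0) ∧ 1 ≤ ⟪u, ∑ β ∈ Δ, w β⟫ := by
  have hIΔ : I ⊆ Δ := hI.trans (erase_subset α Δ)
  obtain ⟨κ, hκ, horth⟩ := exists_nonneg_coeffs_add_orthogonal (hΔ.mono (coe_subset.mpr hIΔ))
    fun γ hγ => hΔ hα (hIΔ hγ) (ne_of_mem_erase (hI hγ)).symm
  refine ⟨α + ∑ β ∈ I, κ β • β, ?_, horth, fun γ hγ hγα => ?_, ?_⟩
  · rw [add_sub_cancel_left]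
    exact Submodule.sum_mem _ fun β hβ => Submodule.smul_mem _ _ (Submodule.subset_span hβ)
  · by_cases hγI : γ ∈ I
    · exact (horth γ hγI).le
    have hαγ := hΔ hα hγ (Ne.symm hγα)
    have hIγ : ∑ β ∈ I, ⟪κ β • β, γ⟫ ≤ 0 := sum_nonpos fun β hβ => by
      rw [real_inner_smul_left]
      exact mul_nonpos_of_nonneg_of_nonpos (hκ β hβ)
        (hΔ (hIΔ hβ) hγ (by rintro rfl; exact hγI hβ))
    rw [inner_add_left, sum_inner]
    linarith
  · rw [inner_add_left, sum_inner, hw.inner_sum hα, sum_congr rfl fun β hβ => by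
      rw [real_inner_smul_left, hw.inner_sum (hIΔ hβ), mul_one]]
    linarith [sum_nonneg hκ]

end DualFamily

lemma le_sum_mul_of_one_le_sum {ι : Type*} {s : Finset ι} {t x : ι → ℝ} {i : ι}
    (ht : ∀ j ∈ s, j ≠ i → t j ≤ 0) (hx : ∀ j ∈ s, t j ≠ 0 → x j ≤ x i)
    (hsum : 1 ≤ ∑ j ∈ s, t j) (hxi : 0 ≤ x i) : x i ≤ ∑ j ∈ s, t j * x j :=
  calc x i ≤ (∑ j ∈ s, t j) * x i := le_mul_of_one_le_left hxi hsum
    _ = ∑ j ∈ s, t j * x i := sum_mul _ _ _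
    _ ≤ ∑ j ∈ s, t j * x j := sum_le_sum fun j hj => by
        rcases eq_or_ne j i with rfl | hji
        · rfl
        rcases eq_or_ne (t j) 0 with h0 | h0
        · simp [h0]
        exact mul_le_mul_of_nonpos_left (hx j hj h0) (ht j hj hji)

/-- Theorem of the appendix (Li): for `α ∈ Δ` and `I ⊆ Δ∖{α}`, every
`a ∈ 𝔞_I = ∩_{β∈I} ker β ⊆ E*` satisfying `w̄_α(a) ≥ w̄_γ(a)` for all `γ ∈ Δ∖I` and
`w̄_α(a) ≥ 0` also satisfies `α(a) ≥ w̄_α(a)`. -/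
theorem root_ge_weighted_dual_weight_on_aI
    {E : Type*} [NormedAddCommGroup E] [InnerProductSpace ℝ E] [FiniteDimensional ℝ E]
    [DecidableEq E] (Φ : Set E) (Δ : Finset E) (hbase : IsRootSystemBase Φ Δ)
    (w : E → E) (hw : ∀ α ∈ Δ, ∀ β ∈ Δ, ⟪w α, β⟫ = if α = β then (1 : ℝ) else 0)
    (d : E → ℝ) (hd : ∀ γ ∈ Δ, d γ = ∑ β ∈ Δ, ⟪w γ, w β⟫)
    (α : E) (hα : α ∈ Δ) (I : Finset E) (hI : I ⊆ Δ.erase α)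
    (a : Module.Dual ℝ E) (ha : ∀ β ∈ I, a β = 0)
    (hmax : ∀ γ ∈ Δ \ I, (d α)⁻¹ * a (w α) ≥ (d γ)⁻¹ * a (w γ))
    (hnonneg : (d α)⁻¹ * a (w α) ≥ 0) :
    a α ≥ (d α)⁻¹ * a (w α) := by
  replace hw : IsDualFamily Δ w := hw
  have hΔ := hbase.pairwise_inner_nonpos hw
  replace hd : ∀ γ ∈ Δ, d γ = ⟪w γ, ∑ β ∈ Δ, w β⟫ := fun γ hγ => by rw [hd γ hγ, inner_sum]
  have hdpos : ∀ γ ∈ Δ, 0 < d γ := fun γ hγ =>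
    hd γ hγ ▸ hw.inner_sum_pos hbase.span_top hΔ hγ
  obtain ⟨u, huα, horth, hnonpos, hone⟩ := hw.exists_sub_mem_span_inner_nonpos hΔ hα hI
  have hau : a α = a u := by
    have hker : a (u - α) = 0 := (Submodule.span_le (p := LinearMap.ker a)).mpr ha huα
    rwa [map_sub, sub_eq_zero, eq_comm] at hker
  have hexpand : a u = ∑ γ ∈ Δ, ⟪u, γ⟫ * d γ * ((d γ)⁻¹ * a (w γ)) := by
    conv_lhs => rw [← hw.sum_inner_smul hbase.span_top u]
    simp only [map_sum, map_smul, smul_eq_mul]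
    exact sum_congr rfl fun γ hγ => by field_simp [(hdpos γ hγ).ne']
  have hsum : ∑ γ ∈ Δ, ⟪u, γ⟫ * d γ = ⟪u, ∑ β ∈ Δ, w β⟫ := by
    conv_rhs => rw [← hw.sum_inner_smul hbase.span_top u]
    rw [sum_inner]
    exact sum_congr rfl fun γ hγ => by rw [real_inner_smul_left, hd γ hγ]
  rw [hau, hexpand]
  exact le_sum_mul_of_one_le_sum
    (fun γ hγ hγα => mul_nonpos_of_nonpos_of_nonneg (hnonpos γ hγ hγα) (hdpos γ hγ).le)
    (fun γ hγ hne => hmax γ (mem_sdiff.mpr ⟨hγ, fun hγI => hne (by simp [horth γ hγI])⟩))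
    (hsum ▸ hone) hnonneg
end
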